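/- arXiv:2207.13244 — 2 statements merged into one kernel-verified Lean document; each statement's English description precedes it below -/
import Mathlib

section
/- Let G be a d-degenerate graph with d ≥ 1. For any integer k > d, every two proper k-colorings of G are Kempe equivalent. -/
open SimpleGraph

variable {V : Type*}

/-- `c` is a proper `k`-coloring of the simple graph `G`. -/
def IsProperColoring (G : SimpleGraph V) (k : ℕ) (c : V → Fin k) : Prop :=
  ∀ ⦃u v : V⦄, G.Adj u v → c u ≠ c v

/-- The subgraph of `G` spanned by the vertices colored `i` or `j` (all other
vertices are isolated in this graph). -/
def twoColorSub (G : SimpleGraph V) {k : ℕ} (c : V → Fin k) (i j : Fin k) :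
    SimpleGraph V where
  Adj u v := G.Adj u v ∧ (c u = i ∨ c u = j) ∧ (c v = i ∨ c v = j)
  symm := ⟨fun _ _ h => ⟨h.1.symm, h.2.2, h.2.1⟩⟩
  loopless := ⟨fun v h => G.loopless.irrefl v h.1⟩

/-- A single Kempe change: swap the colors `i` and `j` on the connected component
of the `(i,j)`-colored subgraph containing the vertex `v₀`. -/
def KempeStep (G : SimpleGraph V) {k : ℕ} (c c' : V → Fin k) : Prop :=
  ∃ i j : Fin k, i ≠ j ∧ ∃ v₀ : V,
    (∀ v : V, (twoColorSub G c i j).Reachable v₀ v →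
      (c v = i → c' v = j) ∧ (c v = j → c' v = i) ∧ (c v ≠ i → c v ≠ j → c' v = c v)) ∧
    (∀ v : V, ¬ (twoColorSub G c i j).Reachable v₀ v → c' v = c v)

/-- Two colorings are Kempe equivalent if one is obtained from the other by a
finite sequence of Kempe changes. -/
def KempeEquiv (G : SimpleGraph V) {k : ℕ} (c c' : V → Fin k) : Prop :=
  Relation.ReflTransGen (fun a b : V → Fin k => KempeStep G a b) c c'

/-- `G` is obtained from a bipartite graph with parts `S` and `Sᶜ` by adding the
edges of `H`, each of which joins two vertices in the same part. -/
def IsBPlusE (G : SimpleGraph V) (S : Set V) (H : SimpleGraph V) : Prop :=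
  H ≤ G ∧
  (∀ u v : V, G.Adj u v → ¬ H.Adj u v → (u ∈ S ↔ v ∉ S)) ∧
  (∀ u v : V, H.Adj u v → (u ∈ S ↔ v ∈ S))

/-!
Induct on the number of edges. A d-degenerate graph with an edge has a non-isolated vertex `v`
of degree at most `d`; deleting the edges at `v` keeps the graph d-degenerate, so the two
colorings are Kempe equivalent there. Each Kempe change away from `v` lifts to Kempe changes of
`G` with the same effect off `v`: since `deg v < k`, either some color outside `{i, j}` is missing
around `v` (recolor `v` with it, taking `v` out of the `(i, j)`-subgraph), or at most one
neighbour of `v` has color `i` or `j`. In both cases `v` is at most a leaf of the `(i, j)`-subgraph,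
so deleting it does not split any Kempe chain. At the end the colorings differ only at `v`, whose
target color is free, and one more Kempe change finishes.
-/

open Function Set Relation

section Counting

variable {k : ℕ}

theorem exists_forall_ne_or_subsingleton_inter_preimage_pair {N : Set V} (hN : N.Finite)
    (hcard : N.ncard < k) (f : V → Fin k) (i j : Fin k) :
    (∃ a, a ≠ i ∧ a ≠ j ∧ ∀ u ∈ N, f u ≠ a) ∨ (N ∩ f ⁻¹' {i, j}).Subsingleton := by
  by_contra! ⟨hmiss, hpair⟩
  have hout : ({i, j}ᶜ : Set (Fin k)) ⊆ f '' (N \ f ⁻¹' {i, j}) := by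
    intro a ha
    simp only [mem_compl_iff, mem_insert_iff, mem_singleton_iff, not_or] at ha
    obtain ⟨u, hu, rfl⟩ := hmiss a ha.1 ha.2
    exact ⟨u, ⟨hu, by simpa using ha⟩, rfl⟩
  have hk : ({i, j} : Set (Fin k)).ncard + ({i, j}ᶜ : Set (Fin k)).ncard = k := by
    simpa using ncard_add_ncard_compl ({i, j} : Set (Fin k))
  have hij : ({i, j} : Set (Fin k)).ncard ≤ 2 := (ncard_insert_le _ _).trans (by simp)
  have hdiff : ({i, j}ᶜ : Set (Fin k)).ncard ≤ (N \ f ⁻¹' {i, j}).ncard :=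
    (ncard_le_ncard hout (hN.sdiff.image f)).trans (ncard_image_le hN.sdiff)
  have hinter : 1 < (N ∩ f ⁻¹' {i, j}).ncard :=
    one_lt_ncard_iff_nontrivial_and_finite.mpr ⟨hpair, hN.inter_of_left _⟩
  have hsplit := ncard_inter_add_ncard_sdiff_eq_ncard N (f ⁻¹' {i, j}) hN
  omega

end Counting

section KempeSwap

variable {k : ℕ} {G : SimpleGraph V} {γ : V → Fin k} {i j : Fin k} {v₀ : V}

open Classical in
noncomputable def kempeSwap (G : SimpleGraph V) (γ : V → Fin k) (i j : Fin k) (v₀ : V) :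
    V → Fin k :=
  fun u => if (twoColorSub G γ i j).Reachable v₀ u then Equiv.swap i j (γ u) else γ u

@[simp]
theorem twoColorSub_adj {u w : V} :
    (twoColorSub G γ i j).Adj u w ↔ G.Adj u w ∧ (γ u = i ∨ γ u = j) ∧ (γ w = i ∨ γ w = j) :=
  Iff.rfl

theorem kempeStep_kempeSwap (hij : i ≠ j) (v₀ : V) : KempeStep G γ (kempeSwap G γ i j v₀) := by
  refine ⟨i, j, hij, v₀, fun u hu => ?_, fun u hu => by simp [kempeSwap, hu]⟩
  simp only [kempeSwap, if_pos hu]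
  exact ⟨fun h => by rw [h, Equiv.swap_apply_left], fun h => by rw [h, Equiv.swap_apply_right],
    fun hi hj => Equiv.swap_apply_of_ne_of_ne hi hj⟩

theorem KempeStep.exists_eq_kempeSwap {γ' : V → Fin k} (h : KempeStep G γ γ') :
    ∃ i j, i ≠ j ∧ ∃ v₀, γ' = kempeSwap G γ i j v₀ := by
  obtain ⟨i, j, hij, v₀, hin, hout⟩ := h
  refine ⟨i, j, hij, v₀, funext fun u => ?_⟩
  by_cases hu : (twoColorSub G γ i j).Reachable v₀ u
  · obtain ⟨hi, hj, hother⟩ := hin u hu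
    simp only [kempeSwap, if_pos hu, Equiv.swap_apply_def]
    split_ifs with hui huj
    exacts [hi hui, hj huj, hother hui huj]
  · simp [kempeSwap, hu, hout u hu]

theorem kempeSwap_of_isIsolated [DecidableEq V] (h : (twoColorSub G γ i j).IsIsolated v₀) :
    kempeSwap G γ i j v₀ = update γ v₀ (Equiv.swap i j (γ v₀)) := by
  funext u
  obtain rfl | hu := eq_or_ne u v₀
  · simp [kempeSwap]
  · have : ¬ (twoColorSub G γ i j).Reachable v₀ u := by
      rintro ⟨_ | ⟨hadj, _⟩⟩
      exacts [hu rfl, h _ hadj]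
    simp [kempeSwap, this, hu]

theorem IsProperColoring.kempeSwap (hγ : IsProperColoring G k γ) :
    IsProperColoring G k (kempeSwap G γ i j v₀) := by
  intro u w huw
  have hne := hγ huw
  have hchain (hu : γ u = i ∨ γ u = j) (hw : γ w = i ∨ γ w = j) :
      (twoColorSub G γ i j).Reachable v₀ u ↔ (twoColorSub G γ i j).Reachable v₀ w :=
    ⟨fun h => h.trans (Adj.reachable ⟨huw, hu, hw⟩),
      fun h => h.trans (Adj.reachable ⟨huw.symm, hw, hu⟩)⟩
  unfold _root_.kempeSwap
  rw [Equiv.swap_apply_def, Equiv.swap_apply_def]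
  split_ifs <;> grind

end KempeSwap

section Recoloring

variable {k : ℕ} {G : SimpleGraph V} {γ γ' : V → Fin k} {v : V} {a : Fin k}

theorem IsProperColoring.mono {H : SimpleGraph V} (hγ : IsProperColoring G k γ) (h : H ≤ G) :
    IsProperColoring H k γ :=
  fun _ _ huw => hγ (h huw)

theorem IsProperColoring.update [DecidableEq V] (hγ : IsProperColoring G k γ)
    (ha : ∀ u, G.Adj v u → γ u ≠ a) : IsProperColoring G k (update γ v a) := by
  intro u w huw
  rcases eq_or_ne u v with rfl | hu
  · simpa [huw.ne'] using (ha w huw).symm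
  rcases eq_or_ne w v with rfl | hw
  · simpa [hu] using ha u huw.symm
  simpa [hu, hw] using hγ huw

theorem kempeEquiv_update [DecidableEq V] (hγ : IsProperColoring G k γ)
    (ha : ∀ u, G.Adj v u → γ u ≠ a) : KempeEquiv G γ (update γ v a) := by
  obtain hva | hva := eq_or_ne (γ v) a
  · rw [← hva, update_eq_self]
    exact .refl
  have hiso : (twoColorSub G γ (γ v) a).IsIsolated v := by
    rintro u ⟨hvu, -, hu | hu⟩
    exacts [hγ hvu hu.symm, ha u hvu hu]
  have := kempeSwap_of_isIsolated hiso
  rw [Equiv.swap_apply_left] at this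
  exact .single (this ▸ kempeStep_kempeSwap hva v)

theorem kempeEquiv_of_eqOn_compl_singleton (hγ : IsProperColoring G k γ)
    (hγ' : IsProperColoring G k γ') (h : EqOn γ γ' {v}ᶜ) : KempeEquiv G γ γ' := by
  classical
  have : γ' = update γ v (γ' v) := by
    funext u
    rcases eq_or_ne u v with rfl | hu
    · simp
    · simp [hu, h hu]
  rw [this]
  refine kempeEquiv_update hγ fun u hvu => ?_
  rw [h hvu.ne']
  exact hγ' hvu.symm

theorem kempeEquiv_bot [Finite V] (γ γ' : V → Fin k) : KempeEquiv (⊥ : SimpleGraph V) γ γ' := by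
  classical
  have := Fintype.ofFinite V
  have hproper (δ : V → Fin k) : IsProperColoring ⊥ k δ := fun _ _ h => h.elim
  suffices ∀ s : Finset V, KempeEquiv ⊥ γ (s.piecewise γ' γ) by
    simpa using this Finset.univ
  intro s
  induction s using Finset.induction_on with
  | empty =>
    rw [Finset.piecewise_empty]
    exact .refl
  | insert a s _ ih =>
    rw [Finset.piecewise_insert]
    exact ih.trans (kempeEquiv_update (hproper _) fun _ h => h.elim)

end Recoloring

section DeleteIncidenceSet

variable {k : ℕ} {G T : SimpleGraph V} {γ δ : V → Fin k} {i j : Fin k} {v u₀ : V}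

theorem reachable_deleteIncidenceSet_iff (hv : (T.neighborSet v).Subsingleton) {a b : V}
    (ha : a ≠ v) (hb : b ≠ v) : (T.deleteIncidenceSet v).Reachable a b ↔ T.Reachable a b := by
  classical
  refine ⟨fun h => h.mono (T.deleteIncidenceSet_le v), fun h => ?_⟩
  obtain ⟨w, hw⟩ : ∃ w, T.neighborSet v ⊆ {w} :=
    hv.eq_empty_or_singleton.elim (fun h => ⟨v, h ▸ empty_subset _⟩) fun ⟨w, h⟩ => ⟨w, h.subset⟩
  -- a walk through `v` enters and leaves it via `w`, so it can be shortcut at `w`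
  let shortcut : V → V := fun x => if x = v then w else x
  have hstep (x y : V) (hxy : T.Adj x y) :
      ReflTransGen (T.deleteIncidenceSet v).Adj (shortcut x) (shortcut y) := by
    by_cases hx : x = v
    · subst hx
      obtain rfl : y = w := hw hxy
      simp only [shortcut, if_pos rfl, if_neg hxy.ne']
      exact .refl
    by_cases hy : y = v
    · subst hy
      obtain rfl : x = w := hw hxy.symm
      simp only [shortcut, if_pos rfl, if_neg hxy.ne]
      exact .refl
    simpa only [shortcut, if_neg hx, if_neg hy] using
      .single (deleteIncidenceSet_adj.mpr ⟨hxy, hx, hy⟩)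
  rw [reachable_iff_reflTransGen] at h ⊢
  simpa [onFun, shortcut, ha, hb] using ReflTransGen.lift' shortcut hstep _ _ h

theorem twoColorSub_deleteIncidenceSet (h : EqOn γ δ {v}ᶜ) :
    twoColorSub (G.deleteIncidenceSet v) δ i j = (twoColorSub G γ i j).deleteIncidenceSet v := by
  ext a b
  simp only [twoColorSub_adj, deleteIncidenceSet_adj]
  by_cases ha : a = v
  · simp [ha]
  by_cases hb : b = v
  · simp [hb]
  rw [h ha, h hb]
  tauto

theorem eqOn_kempeSwap_deleteIncidenceSet (hγδ : EqOn γ δ {v}ᶜ) (hu₀ : u₀ ≠ v)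
    (hv : ((twoColorSub G γ i j).neighborSet v).Subsingleton) :
    EqOn (kempeSwap G γ i j u₀) (kempeSwap (G.deleteIncidenceSet v) δ i j u₀) {v}ᶜ := by
  intro u hu
  have hreach := reachable_deleteIncidenceSet_iff hv hu₀ hu
  rw [← twoColorSub_deleteIncidenceSet hγδ] at hreach
  by_cases hr : (twoColorSub G γ i j).Reachable u₀ u <;> simp [kempeSwap, hr, hreach, hγδ hu]

end DeleteIncidenceSet

section Lifting

variable {k : ℕ} {G : SimpleGraph V} {γ δ δ' : V → Fin k} {v : V}

theorem exists_kempeEquiv_subsingleton_neighborSet_twoColorSub [Finite V]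
    (hv : (G.neighborSet v).ncard < k) (hγ : IsProperColoring G k γ) (i j : Fin k) :
    ∃ γ₁, IsProperColoring G k γ₁ ∧ EqOn γ₁ γ {v}ᶜ ∧ KempeEquiv G γ γ₁ ∧
      ((twoColorSub G γ₁ i j).neighborSet v).Subsingleton := by
  classical
  rcases exists_forall_ne_or_subsingleton_inter_preimage_pair (toFinite _) hv γ i j with
    ⟨a, hai, haj, ha⟩ | hsub
  · refine ⟨update γ v a, hγ.update ha, fun u hu => update_of_ne hu _ _, kempeEquiv_update hγ ha,
      subsingleton_of_forall_eq v fun u ⟨_, hva, _⟩ => ?_⟩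
    simp only [update_self] at hva
    exact (hva.elim hai haj).elim
  · exact ⟨γ, hγ, eqOn_refl _ _, .refl, hsub.anti fun u ⟨hvu, _, hu⟩ => ⟨hvu, hu⟩⟩

theorem KempeStep.exists_lift [Finite V] (hv : (G.neighborSet v).ncard < k)
    (hγ : IsProperColoring G k γ) (hγδ : EqOn γ δ {v}ᶜ)
    (h : KempeStep (G.deleteIncidenceSet v) δ δ') :
    ∃ γ', IsProperColoring G k γ' ∧ EqOn γ' δ' {v}ᶜ ∧ KempeEquiv G γ γ' := by
  classical
  obtain ⟨i, j, hij, u₀, rfl⟩ := h.exists_eq_kempeSwap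
  obtain rfl | hu₀ := eq_or_ne u₀ v
  · have hiso : (twoColorSub (G.deleteIncidenceSet u₀) δ i j).IsIsolated u₀ :=
      fun _ hu => (deleteIncidenceSet_adj.mp hu.1).2.1 rfl
    refine ⟨γ, hγ, fun u hu => ?_, .refl⟩
    rw [kempeSwap_of_isIsolated hiso, update_of_ne hu]
    exact hγδ hu
  obtain ⟨γ₁, hγ₁, hγ₁γ, hγγ₁, hsub⟩ :=
    exists_kempeEquiv_subsingleton_neighborSet_twoColorSub hv hγ i j
  exact ⟨kempeSwap G γ₁ i j u₀, hγ₁.kempeSwap,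
    eqOn_kempeSwap_deleteIncidenceSet (hγ₁γ.trans hγδ) hu₀ hsub,
    ReflTransGen.tail hγγ₁ (kempeStep_kempeSwap hij u₀)⟩

theorem KempeEquiv.exists_lift [Finite V] (hv : (G.neighborSet v).ncard < k)
    (hγ : IsProperColoring G k γ) (hγδ : EqOn γ δ {v}ᶜ)
    (h : KempeEquiv (G.deleteIncidenceSet v) δ δ') :
    ∃ γ', IsProperColoring G k γ' ∧ EqOn γ' δ' {v}ᶜ ∧ KempeEquiv G γ γ' := by
  induction h with
  | refl => exact ⟨γ, hγ, hγδ, .refl⟩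
  | tail _ hstep ih =>
    obtain ⟨γ₁, hγ₁, hγ₁δ, hγγ₁⟩ := ih
    obtain ⟨γ', hγ', hγ'δ, hγ₁γ'⟩ := hstep.exists_lift hv hγ₁ hγ₁δ
    exact ⟨γ', hγ', hγ'δ, hγγ₁.trans hγ₁γ'⟩

end Lifting

namespace SimpleGraph

variable {G H : SimpleGraph V} {d : ℕ}

def IsDegenerate (G : SimpleGraph V) (d : ℕ) : Prop :=
  ∀ S : Set V, S.Nonempty → ∃ v ∈ S, (S ∩ G.neighborSet v).ncard ≤ d

theorem IsDegenerate.mono [Finite V] (hG : G.IsDegenerate d) (h : H ≤ G) : H.IsDegenerate d :=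
  fun S hS =>
    let ⟨v, hv, hvd⟩ := hG S hS
    ⟨v, hv, (ncard_le_ncard (inter_subset_inter_right _ fun _ hu => h hu)).trans hvd⟩

theorem IsDegenerate.exists_not_isIsolated_ncard_neighborSet_le (hG : G.IsDegenerate d)
    (hbot : G ≠ ⊥) : ∃ v, ¬ G.IsIsolated v ∧ (G.neighborSet v).ncard ≤ d := by
  obtain ⟨a, b, hab⟩ := ne_bot_iff_exists_adj.mp hbot
  obtain ⟨v, hv, hvd⟩ := hG G.support ⟨a, hab.left_mem_support⟩
  have hsub : G.neighborSet v ⊆ G.support := fun _ hu => G.mem_support.mpr ⟨v, G.adj_symm hu⟩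
  rw [inter_eq_right.mpr hsub] at hvd
  exact ⟨v, G.mem_support_iff_not_isIsolated.mp hv, hvd⟩

theorem deleteIncidenceSet_lt {v : V} (hv : ¬ G.IsIsolated v) : G.deleteIncidenceSet v < G := by
  obtain ⟨w, hw⟩ := exists_adj_iff_not_isIsolated.mpr hv
  exact (deleteIncidenceSet_le G v).lt_of_not_ge fun hle =>
    (deleteIncidenceSet_adj.mp (hle hw)).2.1 rfl

end SimpleGraph

theorem kempe_equiv_of_degenerate_general {V : Type*} [Fintype V] (G : SimpleGraph V)
    (d : ℕ)
    (hdeg : ∀ S : Set V, S.Nonempty → ∃ v ∈ S, (S ∩ {u : V | G.Adj v u}).ncard ≤ d)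
    (k : ℕ) (hk : d < k)
    (c c' : V → Fin k) (hc : IsProperColoring G k c) (hc' : IsProperColoring G k c') :
    KempeEquiv G c c' := by
  induction G using WellFoundedLT.induction with
  | _ G ih =>
  obtain rfl | hG := eq_or_ne G ⊥
  · exact kempeEquiv_bot c c'
  obtain ⟨v, hv, hvd⟩ := IsDegenerate.exists_not_isIsolated_ncard_neighborSet_le hdeg hG
  have hle := G.deleteIncidenceSet_le v
  have hcc' : KempeEquiv (G.deleteIncidenceSet v) c c' :=
    ih _ (deleteIncidenceSet_lt hv) (IsDegenerate.mono hdeg hle) (hc.mono hle) (hc'.mono hle)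
  obtain ⟨γ, hγ, hγc', hcγ⟩ := hcc'.exists_lift (hvd.trans_lt hk) hc (eqOn_refl _ _)
  exact ReflTransGen.trans hcγ (kempeEquiv_of_eqOn_compl_singleton hγ hc' hγc')

/-- For a `d`-degenerate graph `G` with `d ≥ 1` and any `k > d`, every
two proper `k`-colorings of `G` are Kempe equivalent. -/
theorem kempe_equiv_of_degenerate {V : Type*} [Fintype V] (G : SimpleGraph V)
    (d : ℕ) (hd : 1 ≤ d)
    (hdeg : ∀ S : Set V, S.Nonempty → ∃ v ∈ S, (S ∩ {u : V | G.Adj v u}).ncard ≤ d)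
    (k : ℕ) (hk : d < k)
    (c c' : V → Fin k) (hc : IsProperColoring G k c) (hc' : IsProperColoring G k c') :
    KempeEquiv G c c' :=
  kempe_equiv_of_degenerate_general G d hdeg k hk c c' hc hc'
end

section
/- For every integer k ≥ 3 there exists a graph G obtained from a bipartite graph by adding a matching of size k(k-1)/2 inside one part, such that G has two proper k-colorings that are not Kempe equivalent; moreover there are infinitely many such graphs (of arbitrarily large order). -/
/-!
Let `S` be the set of ordered pairs `(x, y)` of distinct colours, with `(x, y)` matched to
`(y, x)`, and let `T` consist of `n + 1` vertices of each colour; join `(x, y) ∈ S` to every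
vertex of `T` whose colour is not `x`. Colouring `(x, y)` by `x` is proper, and it is frozen: for
colours `i ≠ j` every vertex coloured `i` reaches the matching edge `(i, j)(j, i)` through
vertices coloured `i` or `j`, so each Kempe chain is the union of both colour classes and a Kempe
change merely renames colours. Every colouring Kempe equivalent to it therefore separates the
vertices of `T` of distinct colours, while another proper colouring gives all of `T` one colour.
-/

open SimpleGraph

variable {V : Type*}

section KempeFrozen

variable {G : SimpleGraph V} {k : ℕ}

lemma twoColorSub_comm (G : SimpleGraph V) (c : V → Fin k) (i j : Fin k) :
    twoColorSub G c i j = twoColorSub G c j i := by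
  ext u v
  simp only [twoColorSub, or_comm]

lemma twoColorSub_perm_comp (G : SimpleGraph V) (c : V → Fin k) (σ : Equiv.Perm (Fin k))
    (i j : Fin k) : twoColorSub G (σ ∘ c) i j = twoColorSub G c (σ.symm i) (σ.symm j) := by
  ext u v
  simp only [twoColorSub, Function.comp_apply, ← Equiv.eq_symm_apply]

lemma twoColorSub_reachable_color {c : V → Fin k} {i j : Fin k} {u v : V}
    (h : (twoColorSub G c i j).Reachable u v) (hv : c v = i ∨ c v = j) : c u = i ∨ c u = j := by
  obtain ⟨w⟩ := h
  cases w with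
  | nil => exact hv
  | cons hadj _ => exact hadj.2.1

def IsKempeFrozen (G : SimpleGraph V) (c : V → Fin k) : Prop :=
  ∀ i j, i ≠ j → ∀ u v, (c u = i ∨ c u = j) → (c v = i ∨ c v = j) →
    (twoColorSub G c i j).Reachable u v

variable {c d : V → Fin k}

lemma IsKempeFrozen.perm_comp (hc : IsKempeFrozen G c) (σ : Equiv.Perm (Fin k)) :
    IsKempeFrozen G (σ ∘ c) := by
  intro i j hij u v hu hv
  rw [twoColorSub_perm_comp]
  simp only [Function.comp_apply, ← Equiv.eq_symm_apply] at hu hv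
  exact hc _ _ (σ.symm.injective.ne hij) u v hu hv

lemma IsKempeFrozen.exists_perm_of_kempeStep (hc : IsKempeFrozen G c) (h : KempeStep G c d) :
    ∃ τ : Equiv.Perm (Fin k), d = τ ∘ c := by
  obtain ⟨i, j, hij, v₀, hin, hout⟩ := h
  have fixed : ∀ v, ¬(c v = i ∨ c v = j) → d v = c v := fun v hv => by
    by_cases hr : (twoColorSub G c i j).Reachable v₀ v
    · exact (hin v hr).2.2 (not_or.mp hv).1 (not_or.mp hv).2
    · exact hout v hr
  by_cases hv₀ : c v₀ = i ∨ c v₀ = j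
  · refine ⟨Equiv.swap i j, funext fun v => ?_⟩
    by_cases hv : c v = i ∨ c v = j
    · have hr := hc i j hij v₀ v hv₀ hv
      rcases hv with hv | hv <;> simp [hv, (hin v hr).1, (hin v hr).2.1]
    · rw [fixed v hv, Function.comp_apply,
        Equiv.swap_apply_of_ne_of_ne (not_or.mp hv).1 (not_or.mp hv).2]
  · refine ⟨Equiv.refl _, funext fun v => ?_⟩
    by_cases hv : c v = i ∨ c v = j
    · exact hout v fun hr => hv₀ (twoColorSub_reachable_color hr hv)
    · exact fixed v hv

lemma IsKempeFrozen.exists_perm_of_kempeEquiv (hc : IsKempeFrozen G c) (h : KempeEquiv G c d) :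
    ∃ τ : Equiv.Perm (Fin k), d = τ ∘ c := by
  induction h with
  | refl => exact ⟨Equiv.refl _, rfl⟩
  | tail _ hstep ih =>
    obtain ⟨σ, rfl⟩ := ih
    obtain ⟨τ, rfl⟩ := (hc.perm_comp σ).exists_perm_of_kempeStep hstep
    exact ⟨σ.trans τ, rfl⟩

lemma IsKempeFrozen.eq_of_kempeEquiv (hc : IsKempeFrozen G c) (h : KempeEquiv G c d) {u v : V}
    (huv : d u = d v) : c u = c v := by
  obtain ⟨τ, rfl⟩ := hc.exists_perm_of_kempeEquiv h
  exact τ.injective huv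

end KempeFrozen

namespace FrozenBPlusM

variable {k n : ℕ}

abbrev Vert (k n : ℕ) : Type := {p : Fin k × Fin k // p.1 ≠ p.2} ⊕ Fin k × Fin (n + 1)

def col : Vert k n → Fin k := Sum.elim (fun p => p.1.1) Prod.fst

def matching (k n : ℕ) : SimpleGraph (Vert k n) where
  Adj u v := ∃ (x y : Fin k) (h : x ≠ y), u = .inl ⟨(x, y), h⟩ ∧ v = .inl ⟨(y, x), h.symm⟩
  symm := ⟨fun _ _ ⟨x, y, h, hu, hv⟩ => ⟨y, x, h.symm, hv, hu⟩⟩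
  loopless := ⟨fun _ ⟨x, y, h, hu, hv⟩ => h (by simp_all)⟩

def graph (k n : ℕ) : SimpleGraph (Vert k n) :=
  matching k n ⊔ (completeBipartiteGraph _ _ ⊓ (⊤ : SimpleGraph (Fin k)).comap col)

lemma le_card_vert (hk : 1 ≤ k) : n ≤ Fintype.card (Vert k n) := by
  simp only [Fintype.card_sum, Fintype.card_prod, Fintype.card_fin]
  nlinarith

lemma matching_adj_isLeft {u v : Vert k n} (h : (matching k n).Adj u v) :
    u.isLeft ∧ v.isLeft := by
  obtain ⟨x, y, _, rfl, rfl⟩ := h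
  exact ⟨rfl, rfl⟩

lemma matching_adj_unique {u v w : Vert k n} (hv : (matching k n).Adj u v)
    (hw : (matching k n).Adj u w) : v = w := by
  obtain ⟨x, y, _, rfl, rfl⟩ := hv
  obtain ⟨x', y', _, hu, rfl⟩ := hw
  simp only [Sum.inl.injEq, Subtype.mk.injEq, Prod.mk.injEq] at hu
  obtain ⟨rfl, rfl⟩ := hu
  rfl

lemma isBPlusE : IsBPlusE (graph k n) {u | u.isLeft} (matching k n) := by
  refine ⟨le_sup_left, ?_, fun u v h => ?_⟩
  · rintro u v (h | ⟨h, -⟩) hm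
    · exact absurd h hm
    · rcases u with _ | _ <;> rcases v with _ | _ <;> simp_all [completeBipartiteGraph]
  · simp [matching_adj_isLeft h]

/-- `Sym2.map col` maps the matching bijectively onto the edges of the complete graph on the
colours. -/
lemma ncard_edgeSet_matching : (matching k n).edgeSet.ncard = k.choose 2 := by
  classical
  have htop : (⊤ : SimpleGraph (Fin k)).edgeSet.ncard = k.choose 2 := by
    rw [← coe_edgeFinset, Set.ncard_coe_finset, card_edgeFinset_top_eq_card_choose_two,
      Fintype.card_fin]
  rw [← htop]
  refine Set.ncard_congr (fun e _ => Sym2.map col e) (fun e he => ?_) (fun e e' he he' hee' => ?_)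
    (fun e he => ?_)
  · induction e using Sym2.ind
    obtain ⟨x, y, hxy, rfl, rfl⟩ := he
    exact hxy
  · induction e using Sym2.ind
    induction e' using Sym2.ind
    obtain ⟨x, y, _, rfl, rfl⟩ := he
    obtain ⟨x', y', _, rfl, rfl⟩ := he'
    simp only [Sym2.map_mk, Sym2.eq_iff] at hee'
    rcases hee' with ⟨rfl, rfl⟩ | ⟨rfl, rfl⟩
    · rfl
    · exact Sym2.eq_swap
  · induction e using Sym2.ind with
    | _ x y => exact ⟨s(.inl ⟨(x, y), he⟩, .inl ⟨(y, x), Ne.symm he⟩), ⟨x, y, he, rfl, rfl⟩, rfl⟩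

lemma isProperColoring_col : IsProperColoring (graph k n) k col := by
  rintro u v (⟨x, y, hxy, rfl, rfl⟩ | ⟨-, h⟩)
  · exact hxy
  · exact h

lemma graph_adj_inl_inr {p : {p : Fin k × Fin k // p.1 ≠ p.2}} {t : Fin k × Fin (n + 1)}
    (h : p.1.1 ≠ t.1) : (graph k n).Adj (.inl p) (.inr t) :=
  .inr ⟨.inl ⟨rfl, rfl⟩, h⟩

lemma graph_adj_swap {x y : Fin k} (h : x ≠ y) :
    (graph k n).Adj (.inl ⟨(x, y), h⟩) (.inl ⟨(y, x), h.symm⟩) :=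
  .inl ⟨x, y, h, rfl, rfl⟩

lemma twoColorSub_reachable_of_col_eq {i j : Fin k} (hij : i ≠ j) (u : Vert k n)
    (hu : col u = i) : (twoColorSub (graph k n) col i j).Reachable (.inl ⟨(i, j), hij⟩) u := by
  rcases u with ⟨⟨x, y⟩, hxy⟩ | ⟨x, m⟩ <;> obtain rfl : x = i := hu
  · have h₁ : (twoColorSub (graph k n) col x j).Adj (.inl ⟨(x, j), hij⟩) (.inr (j, 0)) :=
      ⟨graph_adj_inl_inr hij, .inl rfl, .inr rfl⟩
    have h₂ : (twoColorSub (graph k n) col x j).Adj (.inr (j, 0)) (.inl ⟨(x, y), hxy⟩) :=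
      ⟨(graph_adj_inl_inr hij).symm, .inr rfl, .inl rfl⟩
    exact h₁.reachable.trans h₂.reachable
  · have h₁ : (twoColorSub (graph k n) col x j).Adj (.inl ⟨(x, j), hij⟩)
        (.inl ⟨(j, x), hij.symm⟩) :=
      ⟨graph_adj_swap hij, .inl rfl, .inr rfl⟩
    have h₂ : (twoColorSub (graph k n) col x j).Adj (.inl ⟨(j, x), hij.symm⟩) (.inr (x, m)) :=
      ⟨graph_adj_inl_inr hij.symm, .inr rfl, .inl rfl⟩
    exact h₁.reachable.trans h₂.reachable

lemma isKempeFrozen_col : IsKempeFrozen (graph k n) col := by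
  intro i j hij u v hu hv
  have reach : ∀ w, (col w = i ∨ col w = j) →
      (twoColorSub (graph k n) col i j).Reachable (.inl ⟨(i, j), hij⟩) w := by
    rintro w (hw | hw)
    · exact twoColorSub_reachable_of_col_eq hij w hw
    · have hedge : (twoColorSub (graph k n) col i j).Adj (.inl ⟨(i, j), hij⟩)
          (.inl ⟨(j, i), hij.symm⟩) := ⟨graph_adj_swap hij, .inl rfl, .inr rfl⟩
      rw [twoColorSub_comm] at ⊢ hedge
      exact hedge.reachable.trans (twoColorSub_reachable_of_col_eq hij.symm w hw)
  exact (reach u hu).symm.trans (reach v hv)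

def altCol (a b c : Fin k) : Vert k n → Fin k :=
  Sum.elim (fun p => if p.1.1 < p.1.2 then a else b) fun _ => c

lemma isProperColoring_altCol {a b c : Fin k} (hab : a ≠ b) (hac : a ≠ c) (hbc : b ≠ c) :
    IsProperColoring (graph k n) k (altCol a b c) := by
  have hS : ∀ p, altCol (n := n) a b c (.inl p) ≠ c := fun p => by
    simp only [altCol, Sum.elim_inl]
    split_ifs <;> assumption
  rintro u v (⟨x, y, hxy, rfl, rfl⟩ | ⟨h, -⟩)
  · rcases hxy.lt_or_gt with h | h <;> simp [altCol, h, h.not_gt, hab, hab.symm]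
  · rcases u with p | t <;> rcases v with q | s
    · simp [completeBipartiteGraph] at h
    · exact hS p
    · exact (hS q).symm
    · simp [completeBipartiteGraph] at h

end FrozenBPlusM

open FrozenBPlusM

/-- For every `k ≥ 3` and every `n`, there is a `B + M_ℓ` graph of
order at least `n`, with the matching of size `k(k-1)/2` lying inside one part,
having two proper `k`-colorings that are not Kempe equivalent. -/
theorem exists_BplusM_with_nonequivalent_colorings (k : ℕ) (hk : 3 ≤ k) (n : ℕ) :
    ∃ (V : Type) (_ : Fintype V) (G : SimpleGraph V) (S : Set V) (H : SimpleGraph V),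
      n ≤ Fintype.card V ∧
      IsBPlusE G S H ∧
      (∀ u v : V, H.Adj u v → u ∈ S ∧ v ∈ S) ∧
      (∀ u v w : V, H.Adj u v → H.Adj u w → v = w) ∧
      H.edgeSet.ncard = k * (k - 1) / 2 ∧
      ∃ c c' : V → Fin k, IsProperColoring G k c ∧ IsProperColoring G k c' ∧
        ¬ KempeEquiv G c c' := by
  let c₀ : Fin k := ⟨0, by omega⟩
  let c₁ : Fin k := ⟨1, by omega⟩
  let c₂ : Fin k := ⟨2, by omega⟩
  refine ⟨Vert k n, inferInstance, graph k n, {u | u.isLeft}, matching k n, le_card_vert (by omega),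
    isBPlusE, fun u v h => matching_adj_isLeft h, fun u v w => matching_adj_unique,
    by rw [ncard_edgeSet_matching, Nat.choose_two_right], col, altCol c₁ c₂ c₀,
    isProperColoring_col, isProperColoring_altCol (by simp [c₁, c₂]) (by simp [c₁, c₀])
      (by simp [c₂, c₀]), fun h => ?_⟩
  have := isKempeFrozen_col.eq_of_kempeEquiv h (u := .inr (c₀, 0)) (v := .inr (c₁, 0)) rfl
  simp [col, c₀, c₁] at this
end
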